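/- Let G₃ = ⟨g₁, g₂, g₃ ∣ g₂g₁ = g₁^{-1}g₂, g₃g₁ = g₁g₃, g₃g₂ = g₁g₂^{-1}g₃⟩. A map ψ : G₃ → G₃ is an automorphism if and only if there exist a, b, c ∈ ℤ and ε₁, ε₂, ε₃ ∈ {1, -1} such that ψ(g₁) = g₁^{ε₁}, ψ(g₂) = g₁^{a} g₂^{ε₂}, and ψ(g₃) = g₁^{b} g₂^{2c} g₃^{ε₃}. -/

import Mathlib

/-- The relators `g₂g₁g₂⁻¹g₁`, `g₃g₁g₃⁻¹g₁⁻¹`, `g₃g₂g₃⁻¹g₂g₁⁻¹` presenting the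
group `⟨g₁, g₂, g₃ ∣ g₂g₁ = g₁⁻¹g₂, g₃g₁ = g₁g₃, g₃g₂ = g₁g₂⁻¹g₃⟩`. -/
def polyZRelsA1 : Set (FreeGroup (Fin 3)) :=
  {FreeGroup.of 1 * FreeGroup.of 0 * (FreeGroup.of 1)⁻¹ * FreeGroup.of 0,
   FreeGroup.of 2 * FreeGroup.of 0 * (FreeGroup.of 2)⁻¹ * (FreeGroup.of 0)⁻¹,
   FreeGroup.of 2 * FreeGroup.of 1 * (FreeGroup.of 2)⁻¹ * FreeGroup.of 1 * (FreeGroup.of 0)⁻¹}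

/-!
Normal forms `g₁ ^ x * g₂ ^ y * g₃ ^ z` identify `G₃` with `ℤ³` under an explicit twisted
multiplication. In these coordinates every endomorphism `f` preserves the filtration
`G₃ ⊇ ⟨g₁, g₂⟩ ⊇ ⟨g₁⟩` and acts on its three infinite cyclic layers by multiplication with the
`g₁`-exponent of `f g₁`, the `g₂`-exponent of `f g₂` and the `g₃`-exponent of `f g₃`. So `f` is
bijective exactly when these three integers are units, and the `g₂`-exponent of `f g₃` must be
even because `f g₃` commutes with `f g₁ = g₁ ^ ±1`.
-/

theorem mul_zpow_of_mul_mul_inv_eq_inv {G : Type*} [Group G] {a b : G} (h : a * b * a⁻¹ = b⁻¹)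
    (n : ℤ) : (b * a) ^ n = b ^ (n % 2) * a ^ n := by
  have hsq : (b * a) ^ (2 : ℤ) = a ^ (2 : ℤ) := by
    rw [zpow_two, zpow_two]
    calc b * a * (b * a) = b * (a * b * a⁻¹) * (a * a) := by group
      _ = a * a := by rw [h]; group
  have hcomm : Commute (a ^ (2 : ℤ)) b := by
    rw [zpow_two]
    calc a * a * b = a * (a * b * a⁻¹) * a := by group
      _ = a * b⁻¹ * a⁻¹ * (a * a) := by rw [h]; group
      _ = (a * b * a⁻¹)⁻¹ * (a * a) := by rw [conj_inv]
      _ = b * (a * a) := by rw [h, inv_inv]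
  have heven (k : ℤ) : (b * a) ^ (2 * k) = a ^ (2 * k) := by rw [zpow_mul, zpow_mul, hsq]
  obtain ⟨k, rfl | rfl⟩ := Int.even_or_odd' n
  · rw [Int.mul_emod_right, zpow_zero, one_mul, heven]
  · rw [show (2 * k + 1) % 2 = 1 by omega, zpow_one, zpow_add_one, zpow_add_one, heven,
      ← mul_assoc, zpow_mul, (hcomm.zpow_left k).eq, mul_assoc]

theorem zpow_eq_of_map_add {G : Type*} [Group G] {g : G} (f : ℤ → G)
    (hf : ∀ m n, f (m + n) = f m * f n) (h1 : f 1 = g) (n : ℤ) : g ^ n = f n := by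
  let φ : Multiplicative ℤ →* G := MonoidHom.mk' (f ∘ Multiplicative.toAdd) fun _ _ => hf _ _
  simpa [φ, h1] using (map_zpow φ (Multiplicative.ofAdd 1) n).symm

theorem Subgroup.mem_of_zpow_mem {G : Type*} [Group G] {H : Subgroup G} {g : G} {ε : ℤ}
    (hε : ε = 1 ∨ ε = -1) (h : g ^ ε ∈ H) : g ∈ H := by
  rcases hε with rfl | rfl <;> simpa using h

namespace Int

lemma negOnePow_units_mul (u : ℤˣ) (n : ℤ) : ((u : ℤ) * n).negOnePow = n.negOnePow := by
  rcases units_eq_one_or u with rfl | rfl <;> simp [negOnePow_neg]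

lemma units_mul_emod_two (u : ℤˣ) (n : ℤ) : (u * n) % 2 = n % 2 := by
  rcases units_eq_one_or u with rfl | rfl <;> simp [neg_emod_two]

lemma negOnePow_mul_negOnePow_mul (n m : ℤ) : (n.negOnePow : ℤ) * (n.negOnePow * m) = m := by
  rw [← mul_assoc, ← Units.val_mul, units_mul_self, Units.val_one, one_mul]

lemma add_emod_two_eq_add_negOnePow_mul (m n : ℤ) :
    (m + n) % 2 = m % 2 + m.negOnePow * (n % 2) := by
  rcases even_or_odd m with h | h
  · rw [negOnePow_even m h, Units.val_one, one_mul]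
    have := even_iff.mp h
    omega
  · rw [negOnePow_odd m h, Units.val_neg, Units.val_one]
    have := odd_iff.mp h
    omega

end Int

namespace PolyZA1

/-- `⟨x, y, z⟩` stands for the normal form `g₁ ^ x * g₂ ^ y * g₃ ^ z`. -/
@[ext] structure Model where
  x : ℤ
  y : ℤ
  z : ℤ

namespace Model

instance : One Model := ⟨⟨0, 0, 0⟩⟩

instance : Mul Model :=
  ⟨fun p q => ⟨p.x + p.y.negOnePow * (q.x + p.z * (q.y % 2)), p.y + p.z.negOnePow * q.y,
    p.z + q.z⟩⟩

instance : Inv Model :=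
  ⟨fun p => ⟨-(p.y.negOnePow * p.x) - p.z * (p.y % 2), -(p.z.negOnePow * p.y), -p.z⟩⟩

@[simp] lemma x_one : (1 : Model).x = 0 := rfl
@[simp] lemma y_one : (1 : Model).y = 0 := rfl
@[simp] lemma z_one : (1 : Model).z = 0 := rfl
@[simp] lemma x_mul (p q : Model) :
    (p * q).x = p.x + p.y.negOnePow * (q.x + p.z * (q.y % 2)) := rfl
@[simp] lemma y_mul (p q : Model) : (p * q).y = p.y + p.z.negOnePow * q.y := rfl
@[simp] lemma z_mul (p q : Model) : (p * q).z = p.z + q.z := rfl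
@[simp] lemma x_inv (p : Model) : p⁻¹.x = -(p.y.negOnePow * p.x) - p.z * (p.y % 2) := rfl
@[simp] lemma y_inv (p : Model) : p⁻¹.y = -(p.z.negOnePow * p.y) := rfl
@[simp] lemma z_inv (p : Model) : p⁻¹.z = -p.z := rfl

instance : Group Model where
  mul_assoc p q r := by
    ext
    · simp only [x_mul, y_mul, z_mul, Int.negOnePow_add, Int.negOnePow_units_mul,
        Int.add_emod_two_eq_add_negOnePow_mul q.y, Int.units_mul_emod_two, Units.val_mul]
      ring
    · simp only [y_mul, z_mul, Int.negOnePow_add, Units.val_mul]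
      ring
    · simp only [z_mul]
      ring
  one_mul p := by ext <;> simp
  mul_one p := by ext <;> simp
  inv_mul_cancel p := by
    ext
    · simp only [x_mul, x_inv, y_inv, z_inv, x_one, Int.negOnePow_neg, Int.negOnePow_units_mul]
      rcases Int.even_or_odd p.y with h | h
      · rw [Int.negOnePow_even _ h, Int.even_iff.mp h]
        simp
      · rw [Int.negOnePow_odd _ h, Int.odd_iff.mp h]
        simp only [Units.val_neg, Units.val_one]
        ring
    · simp [Int.negOnePow_neg]
    · simp

def X : Model := ⟨1, 0, 0⟩
def Y : Model := ⟨0, 1, 0⟩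
def Z : Model := ⟨0, 0, 1⟩

lemma X_zpow (n : ℤ) : X ^ n = ⟨n, 0, 0⟩ :=
  zpow_eq_of_map_add (fun n => (⟨n, 0, 0⟩ : Model)) (fun _ _ => by ext <;> simp) rfl n

lemma Y_zpow (n : ℤ) : Y ^ n = ⟨0, n, 0⟩ :=
  zpow_eq_of_map_add (fun n => (⟨0, n, 0⟩ : Model)) (fun _ _ => by ext <;> simp) rfl n

lemma Z_zpow (n : ℤ) : Z ^ n = ⟨0, 0, n⟩ :=
  zpow_eq_of_map_add (fun n => (⟨0, 0, n⟩ : Model)) (fun _ _ => by ext <;> simp) rfl n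

lemma eq_zpow_mul_zpow_mul_zpow (p : Model) : p = X ^ p.x * Y ^ p.y * Z ^ p.z := by
  rw [X_zpow, Y_zpow, Z_zpow]
  ext <;> simp

lemma X_mul (p : Model) : X * p = ⟨p.x + 1, p.y, p.z⟩ := by
  ext <;> simp [X, add_comm]

lemma Y_mul (p : Model) : Y * p = ⟨-p.x, p.y + 1, p.z⟩ := by
  ext <;> simp [Y, add_comm]

lemma Z_mul (p : Model) : Z * p = ⟨p.x + p.y % 2, -p.y, p.z + 1⟩ := by
  ext <;> simp [Z, add_comm]

lemma Y_mul_X_mul_inv : Y * X * Y⁻¹ = X⁻¹ := by ext <;> simp [X, Y]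

lemma Z_mul_X_mul_inv : Z * X * Z⁻¹ = X := by ext <;> simp [X, Z]

lemma Z_mul_Y_mul_inv : Z * Y * Z⁻¹ = X * Y⁻¹ := by ext <;> simp [X, Y, Z]

lemma mul_mk_mul_inv (p : Model) (a : ℤ) :
    p * ⟨a, 0, 0⟩ * p⁻¹ = ⟨p.y.negOnePow * a, 0, 0⟩ := by
  ext
  · simp only [x_mul, y_mul, z_mul, x_inv, y_inv, Int.negOnePow_add, Int.negOnePow_units_mul,
      Int.units_mul_emod_two, Int.neg_emod_two]
    rcases Int.even_or_odd p.y with h | h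
    · rw [Int.negOnePow_even _ h, Int.even_iff.mp h]
      simp
    · rw [Int.negOnePow_odd _ h, Int.odd_iff.mp h]
      simp
  · simp [Int.negOnePow_mul_negOnePow_mul]
  · simp

lemma z_zpow (p : Model) (n : ℤ) : (p ^ n).z = n * p.z := by
  induction n using Int.induction_on with
  | zero => simp
  | succ k ih => rw [zpow_add_one, z_mul, ih]; ring
  | pred k ih => rw [zpow_sub_one, z_mul, z_inv, ih]; ring

lemma y_zpow {p : Model} (hp : p.z = 0) (n : ℤ) : (p ^ n).y = n * p.y := by
  induction n using Int.induction_on with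
  | zero => simp
  | succ k ih =>
    rw [zpow_add_one, y_mul, ih, z_zpow, hp, mul_zero, Int.negOnePow_zero, Units.val_one]
    ring
  | pred k ih =>
    rw [zpow_sub_one, y_mul, y_inv, ih, z_zpow, hp, mul_zero, Int.negOnePow_zero, Units.val_one]
    ring

section Endomorphism

variable (f : Model →* Model)

lemma z_map_X : (f X).z = 0 := by
  have h := congrArg (fun p => (f p).z) Y_mul_X_mul_inv
  simp only [map_mul, map_inv, z_mul, z_inv] at h
  omega

lemma z_map_Y : (f Y).z = 0 := by
  have h := congrArg (fun p => (f p).z) Z_mul_Y_mul_inv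
  simp only [map_mul, map_inv, z_mul, z_inv, z_map_X] at h
  omega

lemma y_map_X : (f X).y = 0 := by
  have h := congrArg (fun p => (f p).y) Y_mul_X_mul_inv
  simp only [map_mul, map_inv, y_mul, y_inv, z_mul, z_map_X, z_map_Y, add_zero,
    Int.negOnePow_zero, Units.val_one, one_mul] at h
  omega

lemma map_X_eq : f X = X ^ (f X).x := by
  rw [X_zpow]
  ext <;> simp [y_map_X, z_map_X]

lemma map_Y_eq : f Y = X ^ (f Y).x * Y ^ (f Y).y := by
  conv_lhs => rw [eq_zpow_mul_zpow_mul_zpow (f Y), z_map_Y, zpow_zero, mul_one]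

lemma z_map (p : Model) : (f p).z = p.z * (f Z).z := by
  conv_lhs => rw [eq_zpow_mul_zpow_mul_zpow p]
  simp [z_zpow, z_map_X, z_map_Y]

lemma y_map {p : Model} (hp : p.z = 0) : (f p).y = p.y * (f Y).y := by
  conv_lhs => rw [eq_zpow_mul_zpow_mul_zpow p, hp]
  simp [y_zpow, z_zpow, z_map_X, z_map_Y, y_map_X]

lemma x_map {p : Model} (hy : p.y = 0) (hz : p.z = 0) : (f p).x = p.x * (f X).x := by
  conv_lhs => rw [eq_zpow_mul_zpow_mul_zpow p, hy, hz]
  simp only [zpow_zero, mul_one, map_zpow]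
  nth_rw 1 [map_X_eq]
  rw [← zpow_mul, X_zpow, mul_comm]

lemma even_y_map_Z (hX : (f X).x = 1 ∨ (f X).x = -1) : Even (f Z).y := by
  have h := congrArg (fun p => (f p).x) Z_mul_X_mul_inv
  simp only [map_mul, map_inv] at h
  rw [map_X_eq, X_zpow, mul_mk_mul_inv] at h
  rw [← Int.negOnePow_eq_one_iff]
  rcases Int.units_eq_one_or (f Z).y.negOnePow with h' | h'
  · exact h'
  · simp only [h', Units.val_neg, Units.val_one] at h
    omega

theorem bijective_of_map_eq {a b c ε₁ ε₂ ε₃ : ℤ} (h₁ : ε₁ = 1 ∨ ε₁ = -1)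
    (h₂ : ε₂ = 1 ∨ ε₂ = -1) (h₃ : ε₃ = 1 ∨ ε₃ = -1) (hX : f X = X ^ ε₁)
    (hY : f Y = X ^ a * Y ^ ε₂) (hZ : f Z = X ^ b * Y ^ (2 * c) * Z ^ ε₃) :
    Function.Bijective f := by
  have eq_zero {ε n : ℤ} (hε : ε = 1 ∨ ε = -1) (h : 0 = n * ε) : n = 0 := by
    rcases hε with rfl | rfl <;> omega
  constructor
  · rw [injective_iff_map_eq_one]
    intro p hp
    have hz : p.z = 0 := eq_zero h₃ (by simpa [hp, hZ, X_zpow, Y_zpow, Z_zpow] using z_map f p)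
    have hy : p.y = 0 := eq_zero h₂ (by simpa [hp, hY, X_zpow, Y_zpow] using y_map f hz)
    have hx : p.x = 0 := eq_zero h₁ (by simpa [hp, hX, X_zpow] using x_map f hy hz)
    ext <;> assumption
  · rw [← MonoidHom.range_eq_top, eq_top_iff]
    have hXr : X ∈ f.range := Subgroup.mem_of_zpow_mem h₁ (f.mem_range.2 ⟨X, hX⟩)
    have hYr : Y ∈ f.range := Subgroup.mem_of_zpow_mem h₂ <| by
      rw [← inv_mul_cancel_left (X ^ a) (Y ^ ε₂), ← hY]
      exact mul_mem (inv_mem (zpow_mem hXr a)) (f.mem_range.2 ⟨Y, rfl⟩)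
    have hZr : Z ∈ f.range := Subgroup.mem_of_zpow_mem h₃ <| by
      rw [← inv_mul_cancel_left (X ^ b * Y ^ (2 * c)) (Z ^ ε₃), ← hZ]
      exact mul_mem (inv_mem (mul_mem (zpow_mem hXr b) (zpow_mem hYr _)))
        (f.mem_range.2 ⟨Z, rfl⟩)
    intro p _
    rw [eq_zpow_mul_zpow_mul_zpow p]
    exact mul_mem (mul_mem (zpow_mem hXr _) (zpow_mem hYr _)) (zpow_mem hZr _)

theorem exists_map_eq_of_bijective (hf : Function.Bijective f) :
    ∃ (a b c ε₁ ε₂ ε₃ : ℤ), (ε₁ = 1 ∨ ε₁ = -1) ∧ (ε₂ = 1 ∨ ε₂ = -1) ∧ (ε₃ = 1 ∨ ε₃ = -1) ∧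
      f X = X ^ ε₁ ∧ f Y = X ^ a * Y ^ ε₂ ∧ f Z = X ^ b * Y ^ (2 * c) * Z ^ ε₃ := by
  let g := (MulEquiv.ofBijective f hf).symm.toMonoidHom
  have hfg (p : Model) : f (g p) = p := (MulEquiv.ofBijective f hf).apply_symm_apply p
  have unit {u v : ℤ} (h : 1 = v * u) : u = 1 ∨ u = -1 :=
    Int.eq_one_or_neg_one_of_mul_eq_one (by rw [mul_comm]; exact h.symm)
  have h₁ : (f X).x = 1 ∨ (f X).x = -1 :=
    unit (by simpa [hfg, X] using x_map f (y_map_X g) (z_map_X g))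
  have h₂ : (f Y).y = 1 ∨ (f Y).y = -1 := unit (by simpa [hfg, Y] using y_map f (z_map_Y g))
  have h₃ : (f Z).z = 1 ∨ (f Z).z = -1 := unit (by simpa [hfg, Z] using z_map f (g Z))
  obtain ⟨c, hc⟩ := even_y_map_Z f h₁
  refine ⟨(f Y).x, (f Z).x, c, _, _, _, h₁, h₂, h₃, map_X_eq f, map_Y_eq f, ?_⟩
  rw [two_mul, ← hc, ← eq_zpow_mul_zpow_mul_zpow]

theorem bijective_iff_exists_map_eq : Function.Bijective f ↔
    ∃ (a b c ε₁ ε₂ ε₃ : ℤ), (ε₁ = 1 ∨ ε₁ = -1) ∧ (ε₂ = 1 ∨ ε₂ = -1) ∧ (ε₃ = 1 ∨ ε₃ = -1) ∧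
      f X = X ^ ε₁ ∧ f Y = X ^ a * Y ^ ε₂ ∧ f Z = X ^ b * Y ^ (2 * c) * Z ^ ε₃ :=
  ⟨exists_map_eq_of_bijective f, fun ⟨_, _, _, _, _, _, h₁, h₂, h₃, hX, hY, hZ⟩ =>
    bijective_of_map_eq f h₁ h₂ h₃ hX hY hZ⟩

end Endomorphism

end Model

abbrev G₃ : Type := PresentedGroup polyZRelsA1

abbrev g₁ : G₃ := PresentedGroup.of 0
abbrev g₂ : G₃ := PresentedGroup.of 1
abbrev g₃ : G₃ := PresentedGroup.of 2

lemma g₂_mul_g₁_mul_inv : g₂ * g₁ * g₂⁻¹ = g₁⁻¹ :=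
  eq_inv_of_mul_eq_one_left <| PresentedGroup.one_of_mem (Set.mem_insert _ _)

lemma g₃_mul_g₁_mul_inv : g₃ * g₁ * g₃⁻¹ = g₁ :=
  mul_inv_eq_one.mp <| PresentedGroup.one_of_mem (by simp [polyZRelsA1])

lemma g₃_mul_g₂_mul_inv : g₃ * g₂ * g₃⁻¹ = g₁ * g₂⁻¹ := by
  rw [← mul_inv_eq_one, mul_inv_rev, inv_inv, ← mul_assoc]
  exact PresentedGroup.one_of_mem (by simp [polyZRelsA1])

lemma g₂_mul_g₁_zpow (x : ℤ) : g₂ * g₁ ^ x = g₁ ^ (-x) * g₂ := by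
  rw [← mul_inv_eq_iff_eq_mul, ← conj_zpow, g₂_mul_g₁_mul_inv, inv_zpow, zpow_neg]

lemma g₃_mul_g₁_zpow (x : ℤ) : g₃ * g₁ ^ x = g₁ ^ x * g₃ :=
  (Commute.zpow_right (mul_inv_eq_iff_eq_mul.mp g₃_mul_g₁_mul_inv) x).eq

lemma g₃_mul_g₂_zpow_mul_inv (y : ℤ) : g₃ * g₂ ^ y * g₃⁻¹ = g₁ ^ (y % 2) * g₂ ^ (-y) := by
  have h : g₂⁻¹ * g₁ * g₂⁻¹⁻¹ = g₁⁻¹ :=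
    calc g₂⁻¹ * g₁ * g₂⁻¹⁻¹ = g₂⁻¹ * g₁⁻¹⁻¹ * g₂ := by group
      _ = g₂⁻¹ * (g₂ * g₁ * g₂⁻¹)⁻¹ * g₂ := by rw [g₂_mul_g₁_mul_inv]
      _ = g₁⁻¹ := by group
  rw [← conj_zpow, g₃_mul_g₂_mul_inv, mul_zpow_of_mul_mul_inv_eq_inv h, inv_zpow']

open Model

lemma relators_eval_one : ∀ r ∈ polyZRelsA1, FreeGroup.lift ![X, Y, Z] r = 1 := by
  simp only [polyZRelsA1, Set.mem_insert_iff, Set.mem_singleton_iff]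
  rintro r (rfl | rfl | rfl) <;> ext <;> simp [X, Y, Z]

def toModel : G₃ →* Model := PresentedGroup.toGroup relators_eval_one

@[simp] lemma toModel_g₁ : toModel g₁ = X := PresentedGroup.toGroup.of _
@[simp] lemma toModel_g₂ : toModel g₂ = Y := PresentedGroup.toGroup.of _
@[simp] lemma toModel_g₃ : toModel g₃ = Z := PresentedGroup.toGroup.of _

def ofModel (p : Model) : G₃ := g₁ ^ p.x * g₂ ^ p.y * g₃ ^ p.z

lemma toModel_ofModel (p : Model) : toModel (ofModel p) = p := by
  simp [ofModel, ← eq_zpow_mul_zpow_mul_zpow]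

lemma ofModel_X_mul (p : Model) : ofModel (X * p) = g₁ * ofModel p := by
  rw [ofModel, ofModel, X_mul, add_comm, zpow_one_add]
  group

lemma ofModel_Y_mul (p : Model) : ofModel (Y * p) = g₂ * ofModel p := by
  rw [ofModel, ofModel, Y_mul, add_comm, zpow_one_add, ← mul_assoc (g₁ ^ _), ← g₂_mul_g₁_zpow]
  group

lemma ofModel_Z_mul (p : Model) : ofModel (Z * p) = g₃ * ofModel p :=
  calc ofModel (Z * p) = g₁ ^ p.x * (g₁ ^ (p.y % 2) * g₂ ^ (-p.y)) * g₃ ^ (p.z + 1) := by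
        rw [ofModel, Z_mul]; group
    _ = g₁ ^ p.x * (g₃ * g₂ ^ p.y * g₃⁻¹) * g₃ ^ (p.z + 1) := by rw [g₃_mul_g₂_zpow_mul_inv]
    _ = g₃ * g₁ ^ p.x * g₂ ^ p.y * g₃ ^ p.z := by rw [g₃_mul_g₁_zpow]; group
    _ = g₃ * ofModel p := by rw [ofModel]; group

/-- The elements `g` with `ofModel (toModel g * p) = g * ofModel p` for all `p` form a subgroup,
so it suffices to check the generators. -/
lemma ofModel_toModel_mul (g : G₃) (p : Model) : ofModel (toModel g * p) = g * ofModel p := by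
  let H : Subgroup G₃ :=
    { carrier := {g | ∀ p, ofModel (toModel g * p) = g * ofModel p}
      mul_mem' := fun {a b} ha hb p => by rw [map_mul, mul_assoc, ha, hb, mul_assoc]
      one_mem' := fun p => by rw [map_one, one_mul, one_mul]
      inv_mem' := fun {a} ha p => by
        rw [eq_inv_mul_iff_mul_eq, ← ha, ← mul_assoc, ← map_mul, mul_inv_cancel, map_one,
          one_mul] }
  refine PresentedGroup.generated_by polyZRelsA1 H (fun j => ?_) g p
  fin_cases j
  · exact fun p => (congrArg (ofModel <| · * p) toModel_g₁).trans (ofModel_X_mul p)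
  · exact fun p => (congrArg (ofModel <| · * p) toModel_g₂).trans (ofModel_Y_mul p)
  · exact fun p => (congrArg (ofModel <| · * p) toModel_g₃).trans (ofModel_Z_mul p)

def equivModel : G₃ ≃* Model :=
  { toModel with
    invFun := ofModel
    left_inv := fun g => by simpa [ofModel] using ofModel_toModel_mul g 1
    right_inv := toModel_ofModel }

lemma equivModel_apply (g : G₃) : equivModel g = toModel g := rfl

end PolyZA1

/-- In `G₃ = ⟨g₁, g₂, g₃ ∣ g₂g₁ = g₁⁻¹g₂, g₃g₁ = g₁g₃, g₃g₂ = g₁g₂⁻¹g₃⟩`, a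
group homomorphism `ψ : G₃ →* G₃` is an automorphism (i.e. bijective) if and
only if there exist `a, b, c ∈ ℤ` and `ε₁, ε₂, ε₃ ∈ {1, -1}` such that
`ψ g₁ = g₁^{ε₁}`, `ψ g₂ = g₁^a g₂^{ε₂}`, and `ψ g₃ = g₁^b g₂^{2c} g₃^{ε₃}`. -/
theorem polyZ_a1_aut_characterization
    (ψ : PresentedGroup polyZRelsA1 →* PresentedGroup polyZRelsA1) :
    letI G₃ := PresentedGroup polyZRelsA1
    letI g₁ : G₃ := PresentedGroup.of 0
    letI g₂ : G₃ := PresentedGroup.of 1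
    letI g₃ : G₃ := PresentedGroup.of 2
    Function.Bijective ψ ↔
      ∃ (a b c ε₁ ε₂ ε₃ : ℤ), (ε₁ = 1 ∨ ε₁ = -1) ∧ (ε₂ = 1 ∨ ε₂ = -1) ∧
        (ε₃ = 1 ∨ ε₃ = -1) ∧
        ψ g₁ = g₁ ^ ε₁ ∧ ψ g₂ = g₁ ^ a * g₂ ^ ε₂ ∧
        ψ g₃ = g₁ ^ b * g₂ ^ (2 * c) * g₃ ^ ε₃ := by
  let f : PolyZA1.Model →* PolyZA1.Model :=
    PolyZA1.equivModel.toMonoidHom.comp (ψ.comp PolyZA1.equivModel.symm.toMonoidHom)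
  have hψ (g h : PolyZA1.G₃) : ψ g = h ↔ f (PolyZA1.equivModel g) = PolyZA1.equivModel h := by
    simp [f]
  have hbij : Function.Bijective ψ ↔ Function.Bijective f := by
    simp [f, EquivLike.comp_bijective, EquivLike.bijective_comp]
  simp only [hψ, hbij, map_mul, map_zpow, PolyZA1.equivModel_apply, PolyZA1.toModel_g₁,
    PolyZA1.toModel_g₂, PolyZA1.toModel_g₃]
  exact PolyZA1.Model.bijective_iff_exists_map_eq f
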